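/- Let p ≥ 2 be an integer and r ≥ 1. Then 0 ≤ ∑_{d ∣ r} μ(r/d) p^d ≤ p^r, where μ is the Möbius function and the sum is over positive divisors d of r. -/

import Mathlib

/-!
Let `q` be the least prime factor of `r ≥ 2` and `m = r / q`. In the sum, the term `d = r`
contributes `p ^ r`, the term `d = m` contributes `-p ^ m`, and every other divisor is smaller
than `m`, so those terms add up to less than `p ^ m` in absolute value (a base-`p` expansion with
digits in `{-1, 0, 1}`). Since `m < r`, also `2 * p ^ m ≤ p ^ r`, and both bounds follow.
-/

open ArithmeticFunction

lemma abs_sum_mul_pow_lt {p n : ℕ} (hp : 2 ≤ p) {s : Finset ℕ} (hs : ∀ k ∈ s, k < n)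
    {f : ℕ → ℤ} (hf : ∀ k ∈ s, |f k| ≤ 1) :
    |∑ k ∈ s, f k * (p : ℤ) ^ k| < (p : ℤ) ^ n :=
  calc |∑ k ∈ s, f k * (p : ℤ) ^ k|
      ≤ ∑ k ∈ s, |f k * (p : ℤ) ^ k| := Finset.abs_sum_le_sum_abs _ _
    _ ≤ ∑ k ∈ s, (p : ℤ) ^ k := Finset.sum_le_sum fun k hk => by
        rw [abs_mul, abs_pow, Nat.abs_cast]
        exact mul_le_of_le_one_left (by positivity) (hf k hk)
    _ < (p : ℤ) ^ n := by exact_mod_cast Nat.geomSum_lt hp hs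

namespace Nat

lemma le_div_minFac_of_mem_properDivisors {r d : ℕ} (hd : d ∈ r.properDivisors) :
    d ≤ r / r.minFac := by
  obtain ⟨⟨k, rfl⟩, hdr⟩ := mem_properDivisors.mp hd
  have hk : 2 ≤ k := by
    by_contra! hk
    interval_cases k <;> simp_all
  have hmin : (d * k).minFac ≤ k := minFac_le_of_dvd hk (dvd_mul_left k d)
  exact (le_div_iff_mul_le (minFac_pos _)).mpr (Nat.mul_le_mul_left d hmin)

lemma div_minFac_mem_properDivisors {r : ℕ} (hr : 2 ≤ r) : r / r.minFac ∈ r.properDivisors :=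
  mem_properDivisors.mpr
    ⟨div_dvd_of_dvd (minFac_dvd r), div_lt_self (by omega) (minFac_prime (by omega)).one_lt⟩

end Nat

lemma abs_sum_divisors_moebius_mul_pow_sub_lt {p r : ℕ} (hp : 2 ≤ p) (hr : 2 ≤ r) :
    |∑ d ∈ r.divisors, moebius (r / d) * (p : ℤ) ^ d - ((p : ℤ) ^ r - (p : ℤ) ^ (r / r.minFac))|
      < (p : ℤ) ^ (r / r.minFac) := by
  set m := r / r.minFac
  have hm : m ∈ r.properDivisors := Nat.div_minFac_mem_properDivisors hr
  have hμm : moebius (r / m) = -1 := by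
    rw [Nat.div_div_self (Nat.minFac_dvd r) (by omega),
      moebius_apply_prime (Nat.minFac_prime (by omega))]
  have hrest : |∑ d ∈ r.properDivisors.erase m, moebius (r / d) * (p : ℤ) ^ d| < (p : ℤ) ^ m :=
    abs_sum_mul_pow_lt hp
      (fun d hd => (Nat.le_div_minFac_of_mem_properDivisors (Finset.mem_of_mem_erase hd)).lt_of_ne
        (Finset.ne_of_mem_erase hd))
      (fun d _ => mod_cast abs_moebius_le_one)
  rw [← Nat.cons_self_properDivisors (by omega), Finset.sum_cons,
    ← Finset.add_sum_erase _ _ hm, hμm, Nat.div_self (by omega)]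
  convert hrest using 2
  rw [moebius_apply_one]
  ring

open ArithmeticFunction in
theorem stmt_0_general (p r : ℕ) (hp : 2 ≤ p) :
    0 ≤ ∑ d ∈ r.divisors, (moebius (r / d)) * (p : ℤ) ^ d ∧
    ∑ d ∈ r.divisors, (moebius (r / d)) * (p : ℤ) ^ d ≤ (p : ℤ) ^ r := by
  rcases lt_or_ge r 2 with hr | hr
  · interval_cases r <;> simp
  have key := abs_lt.mp (abs_sum_divisors_moebius_mul_pow_sub_lt hp hr)
  have hpow : (p : ℤ) * (p : ℤ) ^ (r / r.minFac) ≤ (p : ℤ) ^ r := by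
    rw [← pow_succ']
    exact pow_le_pow_right₀ (by omega)
      (Nat.mem_properDivisors.mp (Nat.div_minFac_mem_properDivisors hr)).2
  have hp' : (2 : ℤ) ≤ p := by exact_mod_cast hp
  constructor <;> nlinarith [pow_pos (by omega : (0 : ℤ) < p) (r / r.minFac)]

open ArithmeticFunction in
theorem stmt_0 (p r : ℕ) (hp : 2 ≤ p) (hr : 1 ≤ r) :
    0 ≤ ∑ d ∈ r.divisors, (moebius (r / d)) * (p : ℤ) ^ d ∧
    ∑ d ∈ r.divisors, (moebius (r / d)) * (p : ℤ) ^ d ≤ (p : ℤ) ^ r :=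
  stmt_0_general p r hp
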